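/- arXiv:0812.0540 — 2 statements merged into one kernel-verified Lean document; each statement's English description precedes it below -/
import Mathlib

section
/- Every natural number n can be written as a sum of two squares plus one triangular number: there exist natural numbers x, y, z with n = x² + y² + t_z. -/
/-!
`n = x² + y² + t_z` is equivalent to `8n + 1 = (2x + 2y)² + (2x - 2y)² + (2z + 1)²`, so it suffices
to write every `N ≡ 1 (mod 4)` as a sum of three squares: one of them is odd, and halving the sum of
the other two three times gives `x² + y²`.

For the three squares we follow the classical argument via ternary forms. By Dirichlet's theorem
there is a prime `P ≡ 2N - 1 (mod 4N)`; then `N D = P + 1` for some `D`, and quadratic reciprocity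
makes `-D` a square `t²` mod `P`, say `t² + D = P s`. The integral ternary form with matrix
`[[s, t, 1], [t, P, 0], [1, 0, N]]` is positive definite of determinant `1`. Reduction theory shows
that such a form is equivalent to `x² + y² + z²`: its minimum `m` on primitive vectors satisfies
`3 m² ≤ 4 k` and `3 k² ≤ 4 m`, where `k` is the minimum of the binary form obtained by completing
the square, so `m = 1` and one recurses on the binary form. In particular its value `N` at the third
basis vector is a sum of three squares.
-/

/-- The `k`-th triangular number. -/
def triangular (k : ℕ) : ℕ := k * (k + 1) / 2

open Matrix

theorem Int.exists_abs_two_mul_mul_add_le {m : ℤ} (hm : 0 < m) (b : ℤ) :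
    ∃ t : ℤ, |2 * (m * t + b)| ≤ m := by
  have hb := Int.emod_add_mul_ediv b m
  have h0 := Int.emod_nonneg b hm.ne'
  have h1 := Int.emod_lt_of_pos b hm
  rcases le_or_gt (2 * (b % m)) m with h | h
  · exact ⟨-(b / m), abs_le.2 ⟨by linarith, by linarith⟩⟩
  · exact ⟨-(b / m) - 1, abs_le.2 ⟨by linarith, by linarith⟩⟩

theorem Int.eq_one_of_three_mul_sq_le {m k : ℤ} (hm : 0 < m) (hmk : 3 * m ^ 2 ≤ 4 * k)
    (hkm : 3 * k ^ 2 ≤ 4 * m) : m = 1 := by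
  have h27 : 27 * m ^ 4 ≤ 64 * m := by nlinarith [mul_self_le_mul_self (by positivity) hmk]
  by_contra hne
  have h2 : 2 ≤ m := by omega
  nlinarith [pow_le_pow_left₀ (by norm_num) h2 3]

namespace Matrix

section Reduction

variable {n : Type*} [Fintype n] [DecidableEq n]

/-- `B i i` is the least value of the quadratic form of `B` on primitive vectors, i.e. on the
columns of unimodular matrices. -/
def IsMinimalAt (B : Matrix n n ℤ) (i : n) : Prop :=
  ∀ N : SpecialLinearGroup n ℤ, B i i ≤ ((N : Matrix n n ℤ)ᵀ * B * N) i i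

theorem PosSemidef.exists_isMinimalAt {A : Matrix n n ℤ} (hA : A.PosSemidef) (i : n) :
    ∃ M : SpecialLinearGroup n ℤ, ((M : Matrix n n ℤ)ᵀ * A * M).IsMinimalAt i := by
  have hnonneg (N : SpecialLinearGroup n ℤ) : 0 ≤ ((N : Matrix n n ℤ)ᵀ * A * N) i i := by
    simpa using (hA.conjTranspose_mul_mul_same (N : Matrix n n ℤ)).diag_nonneg (i := i)
  let f (N : SpecialLinearGroup n ℤ) : ℕ := (((N : Matrix n n ℤ)ᵀ * A * N) i i).toNat
  obtain ⟨M, hM⟩ : ∃ M, ∀ N, f M ≤ f N := ⟨Function.argmin f, fun N => Function.argmin_le f N⟩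
  refine ⟨M, fun N => ?_⟩
  have hMN := hM (M * N)
  have := hnonneg M
  have := hnonneg (M * N)
  simp only [f, SpecialLinearGroup.coe_mul, transpose_mul, Matrix.mul_assoc] at *
  omega

theorem PosDef.transpose_mul_mul_specialLinearGroup {A : Matrix n n ℤ} (hA : A.PosDef)
    (M : SpecialLinearGroup n ℤ) : ((M : Matrix n n ℤ)ᵀ * A * M).PosDef := by
  simpa using hA.conjTranspose_mul_mul_same
    (mulVec_injective_of_det_ne_zero (by simp : (M : Matrix n n ℤ).det ≠ 0))

theorem det_transpose_mul_mul_specialLinearGroup (A : Matrix n n ℤ)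
    (M : SpecialLinearGroup n ℤ) : ((M : Matrix n n ℤ)ᵀ * A * M).det = A.det := by
  simp

theorem exists_eq_transpose_mul_self_of_specialLinearGroup {A : Matrix n n ℤ}
    (M : SpecialLinearGroup n ℤ)
    (h : ∃ L : Matrix n n ℤ, (M : Matrix n n ℤ)ᵀ * A * M = Lᵀ * L) :
    ∃ L : Matrix n n ℤ, A = Lᵀ * L := by
  obtain ⟨L, h⟩ := h
  let M' : Matrix n n ℤ := ((M⁻¹ : SpecialLinearGroup n ℤ) : Matrix n n ℤ)
  have hinv : (M : Matrix n n ℤ) * M' = 1 := by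
    rw [← SpecialLinearGroup.coe_mul, mul_inv_cancel, SpecialLinearGroup.coe_one]
  refine ⟨L * M', ?_⟩
  calc A = ((M : Matrix n n ℤ) * M')ᵀ * A * ((M : Matrix n n ℤ) * M') := by simp [hinv]
    _ = M'ᵀ * (Lᵀ * L) * M' := by rw [← h]; simp only [transpose_mul, Matrix.mul_assoc]
    _ = (L * M')ᵀ * (L * M') := by simp only [transpose_mul, Matrix.mul_assoc]

end Reduction

theorem PosDef.three_mul_sq_le_four_mul_det {B : Matrix (Fin 2) (Fin 2) ℤ} (hB : B.PosDef)
    (hmin : B.IsMinimalAt 0) : 3 * B 0 0 ^ 2 ≤ 4 * B.det := by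
  have hm : 0 < B 0 0 := hB.diag_pos
  have hsymm : B 1 0 = B 0 1 := by simpa using hB.isHermitian.apply 0 1
  obtain ⟨t, ht⟩ := Int.exists_abs_two_mul_mul_add_le hm (B 0 1)
  let N : SpecialLinearGroup (Fin 2) ℤ := ⟨!![t, -1; 1, 0], by simp [det_fin_two]⟩
  have hN : B 0 0 * ((N : Matrix (Fin 2) (Fin 2) ℤ)ᵀ * B * N) 0 0 =
      (B 0 0 * t + B 0 1) ^ 2 + B.det := by
    simp only [N, mul_apply, transpose_apply, of_apply, cons_val', cons_val_zero, cons_val_one,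
      cons_val_fin_one, Fin.sum_univ_two, det_fin_two, hsymm]
    ring
  have hsq : (2 * (B 0 0 * t + B 0 1)) ^ 2 ≤ B 0 0 ^ 2 := sq_le_sq' (abs_le.1 ht).1 (abs_le.1 ht).2
  nlinarith [mul_le_mul_of_nonneg_left (hmin N) hm.le]

theorem PosDef.exists_three_mul_sq_le_four_mul_det {A : Matrix (Fin 2) (Fin 2) ℤ}
    (hA : A.PosDef) : ∃ M : SpecialLinearGroup (Fin 2) ℤ,
      3 * ((M : Matrix (Fin 2) (Fin 2) ℤ)ᵀ * A * M) 0 0 ^ 2 ≤ 4 * A.det := by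
  obtain ⟨M, hM⟩ := hA.posSemidef.exists_isMinimalAt 0
  refine ⟨M, ?_⟩
  simpa using (hA.transpose_mul_mul_specialLinearGroup M).three_mul_sq_le_four_mul_det hM

theorem PosDef.exists_eq_transpose_mul_self_fin_two {A : Matrix (Fin 2) (Fin 2) ℤ}
    (hA : A.PosDef) (hdet : A.det = 1) : ∃ L : Matrix (Fin 2) (Fin 2) ℤ, A = Lᵀ * L := by
  obtain ⟨M, hM⟩ := hA.posSemidef.exists_isMinimalAt 0
  refine exists_eq_transpose_mul_self_of_specialLinearGroup M ?_
  have hB := hA.transpose_mul_mul_specialLinearGroup M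
  have hBdet := det_transpose_mul_mul_specialLinearGroup A M
  generalize (M : Matrix (Fin 2) (Fin 2) ℤ)ᵀ * A * M = B at hM hB hBdet ⊢
  have h3 := hB.three_mul_sq_le_four_mul_det hM
  have hpos : 0 < B 0 0 := hB.diag_pos
  have hB00 : B 0 0 = 1 := by nlinarith
  have hsymm : B 1 0 = B 0 1 := by simpa using hB.isHermitian.apply 0 1
  rw [hdet, det_fin_two, hB00, hsymm] at hBdet
  refine ⟨!![1, B 0 1; 0, 1], ?_⟩
  ext i j
  fin_cases i <;> fin_cases j <;> simp [Matrix.mul_apply, hB00, hsymm]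
  linarith

/-- `B 0 0` times the Schur complement of `B 0 0` in `B`, which stays integral. -/
def scaledSchurComplement {R : Type*} [CommRing R] {n : ℕ}
    (B : Matrix (Fin (n + 1)) (Fin (n + 1)) R) : Matrix (Fin n) (Fin n) R :=
  of fun i j => B 0 0 * B i.succ j.succ - B 0 i.succ * B 0 j.succ

section ScaledSchurComplement

variable {R : Type*} [CommRing R] {B : Matrix (Fin 3) (Fin 3) R}

theorem IsSymm.mul_dotProduct_mulVec_eq (hB : B.IsSymm) (x y z : R) :
    B 0 0 * (![x, y, z] ⬝ᵥ B *ᵥ ![x, y, z]) =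
      (B 0 0 * x + B 0 1 * y + B 0 2 * z) ^ 2 +
        ![y, z] ⬝ᵥ B.scaledSchurComplement *ᵥ ![y, z] := by
  simp only [dotProduct, mulVec, Fin.sum_univ_three, Fin.sum_univ_two, scaledSchurComplement,
    of_apply, cons_val_zero, cons_val_one, cons_val, cons_val_fin_one, Fin.succ_zero_eq_one,
    Fin.succ_one_eq_two, hB.apply 0 1, hB.apply 0 2, hB.apply 1 2]
  ring

theorem IsSymm.det_scaledSchurComplement (hB : B.IsSymm) :
    B.scaledSchurComplement.det = B 0 0 * B.det := by
  simp only [det_fin_two, det_fin_three, scaledSchurComplement, of_apply, Fin.succ_zero_eq_one,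
    Fin.succ_one_eq_two, hB.apply 0 1, hB.apply 0 2]
  ring

end ScaledSchurComplement

theorem PosDef.scaledSchurComplement {B : Matrix (Fin 3) (Fin 3) ℤ} (hB : B.PosDef) :
    B.scaledSchurComplement.PosDef := by
  have hsymm : B.IsSymm := isHermitian_iff_isSymm.1 hB.isHermitian
  have hm : 0 < B 0 0 := hB.diag_pos
  refine of_dotProduct_mulVec_pos ?_ fun v hv => ?_
  · rw [isHermitian_iff_isSymm]
    ext i j
    simp only [transpose_apply, Matrix.scaledSchurComplement, of_apply, hsymm.apply i.succ j.succ]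
    ring
  have hv2 : v = ![v 0, v 1] := by ext i; fin_cases i <;> rfl
  -- the first coordinate of `x` makes the completed square vanish
  set x : Fin 3 → ℤ := ![-(B 0 1 * v 0 + B 0 2 * v 1), B 0 0 * v 0, B 0 0 * v 1]
  have hx : x ≠ 0 := by
    intro h
    apply hv
    rw [hv2]
    have h1 := congrFun h 1
    have h2 := congrFun h 2
    simp only [x, cons_val_one, cons_val, cons_val_zero, Pi.zero_apply, mul_eq_zero, hm.ne',
      false_or] at h1 h2
    simp [h1, h2]
  have key : B 0 0 * (x ⬝ᵥ B *ᵥ x) = B 0 0 ^ 2 * (v ⬝ᵥ B.scaledSchurComplement *ᵥ v) := by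
    rw [hsymm.mul_dotProduct_mulVec_eq, hv2]
    simp only [dotProduct, mulVec, Fin.sum_univ_two, cons_val_zero, cons_val_one, cons_val_fin_one]
    ring
  have := hB.dotProduct_mulVec_pos hx
  simp only [star_trivial] at this ⊢
  nlinarith

theorem PosDef.apply_zero_zero_eq_one {B : Matrix (Fin 3) (Fin 3) ℤ} (hB : B.PosDef)
    (hdet : B.det = 1) (hmin : B.IsMinimalAt 0) : B 0 0 = 1 := by
  have hsymm : B.IsSymm := isHermitian_iff_isSymm.1 hB.isHermitian
  have hm : 0 < B 0 0 := hB.diag_pos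
  obtain ⟨M, hM⟩ := hB.scaledSchurComplement.exists_three_mul_sq_le_four_mul_det
  rw [hsymm.det_scaledSchurComplement, hdet, mul_one] at hM
  set K := B.scaledSchurComplement
  set y := (M : Matrix (Fin 2) (Fin 2) ℤ) 0 0
  set z := (M : Matrix (Fin 2) (Fin 2) ℤ) 1 0
  have hk : ((M : Matrix (Fin 2) (Fin 2) ℤ)ᵀ * K * M) 0 0 = ![y, z] ⬝ᵥ K *ᵥ ![y, z] := by
    simp only [mul_apply, transpose_apply, dotProduct, mulVec, Fin.sum_univ_two, cons_val_zero,
      cons_val_one, cons_val_fin_one, y, z]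
    ring
  rw [hk] at hM
  obtain ⟨t, ht⟩ := Int.exists_abs_two_mul_mul_add_le hm (B 0 1 * y + B 0 2 * z)
  let N : SpecialLinearGroup (Fin 3) ℤ := ⟨!![t, 0, 1; y, (M : Matrix (Fin 2) (Fin 2) ℤ) 0 1, 0;
    z, (M : Matrix (Fin 2) (Fin 2) ℤ) 1 1, 0], by
      have h : (M : Matrix (Fin 2) (Fin 2) ℤ).det = 1 := M.2
      rw [det_fin_two] at h
      simp only [det_fin_three, of_apply, cons_val', cons_val_zero, cons_val_one, cons_val,
        cons_val_fin_one, y, z]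
      linarith⟩
  have hN : ((N : Matrix (Fin 3) (Fin 3) ℤ)ᵀ * B * N) 0 0 = ![t, y, z] ⬝ᵥ B *ᵥ ![t, y, z] := by
    simp only [N, mul_apply, transpose_apply, of_apply, cons_val', cons_val_zero, cons_val_one,
      cons_val, cons_val_fin_one, Fin.sum_univ_three, dotProduct, mulVec]
    ring
  have key := hsymm.mul_dotProduct_mulVec_eq t y z
  have hsq : (2 * (B 0 0 * t + (B 0 1 * y + B 0 2 * z))) ^ 2 ≤ B 0 0 ^ 2 :=
    sq_le_sq' (abs_le.1 ht).1 (abs_le.1 ht).2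
  have h3 : 3 * B 0 0 ^ 2 ≤ 4 * (![y, z] ⬝ᵥ K *ᵥ ![y, z]) := by
    nlinarith [mul_le_mul_of_nonneg_left (hmin N) hm.le]
  exact Int.eq_one_of_three_mul_sq_le hm h3 hM

theorem PosDef.exists_eq_transpose_mul_self_fin_three {A : Matrix (Fin 3) (Fin 3) ℤ}
    (hA : A.PosDef) (hdet : A.det = 1) : ∃ L : Matrix (Fin 3) (Fin 3) ℤ, A = Lᵀ * L := by
  obtain ⟨M, hM⟩ := hA.posSemidef.exists_isMinimalAt 0
  refine exists_eq_transpose_mul_self_of_specialLinearGroup M ?_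
  have hB := hA.transpose_mul_mul_specialLinearGroup M
  have hBdet := det_transpose_mul_mul_specialLinearGroup A M
  generalize (M : Matrix (Fin 3) (Fin 3) ℤ)ᵀ * A * M = B at hM hB hBdet ⊢
  rw [hdet] at hBdet
  have hsymm : B.IsSymm := isHermitian_iff_isSymm.1 hB.isHermitian
  have hB00 := hB.apply_zero_zero_eq_one hBdet hM
  obtain ⟨L, hL⟩ := hB.scaledSchurComplement.exists_eq_transpose_mul_self_fin_two
    (by rw [hsymm.det_scaledSchurComplement, hB00, hBdet, mul_one])
  have hK (i j : Fin 2) : B i.succ j.succ = B 0 i.succ * B 0 j.succ + (Lᵀ * L) i j := by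
    rw [← hL]; simp [Matrix.scaledSchurComplement, hB00]
  have h11 := hK 0 0
  have h12 := hK 0 1
  have h22 := hK 1 1
  simp only [Fin.succ_zero_eq_one, Fin.succ_one_eq_two, mul_apply, transpose_apply,
    Fin.sum_univ_two] at h11 h12 h22
  refine ⟨!![1, B 0 1, B 0 2; 0, L 0 0, L 0 1; 0, L 1 0, L 1 1], ?_⟩
  ext i j
  fin_cases i <;> fin_cases j <;>
    simp [Matrix.mul_apply, Fin.sum_univ_three, hB00, hsymm.apply 0 1, hsymm.apply 0 2,
      hsymm.apply 1 2] <;> linarith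

end Matrix

theorem Nat.exists_prime_mod_four_eq_one_dvd_add_one {N : ℕ} (hN : N % 4 = 1) :
    ∃ P, P.Prime ∧ P % 4 = 1 ∧ N ∣ P + 1 := by
  have : NeZero (4 * N) := ⟨by omega⟩
  have h4N : ((4 * N : ℕ) : ZMod (4 * N)) = 0 := ZMod.natCast_self _
  push_cast at h4N
  have hunit : IsUnit (2 * N - 1 : ZMod (4 * N)) :=
    .of_mul_eq_one (-2 * N - 1) (by linear_combination (-N : ZMod (4 * N)) * h4N)
  obtain ⟨P, -, hP, hPN⟩ := Nat.forall_exists_prime_gt_and_eq_mod hunit 0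
  obtain ⟨k, hk⟩ : ((4 * N : ℕ) : ℤ) ∣ P - (2 * N - 1) := by
    rw [← ZMod.intCast_zmod_eq_zero_iff_dvd]
    push_cast
    rw [hPN, sub_self]
  replace hk : (P : ℤ) + 1 = 2 * N + 4 * (N * k) := by push_cast at hk; linear_combination hk
  refine ⟨P, hP, by omega, Int.natCast_dvd_natCast.1 ⟨2 + 4 * k, ?_⟩⟩
  push_cast
  linear_combination hk

theorem exists_sq_add_eq_mul_of_mul_eq_add_one {N P D : ℕ} [Fact P.Prime] (hP : P % 4 = 1)
    (hN : N % 4 = 1) (hND : N * D = P + 1) : ∃ t s : ℤ, t ^ 2 + D = P * s := by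
  have hP2 : P ≠ 2 := by omega
  have hNDZ : (N : ℤ) * D = P + 1 := by exact_mod_cast hND
  have hNP : legendreSym P N = 1 := by
    rw [jacobiSym.legendreSym.to_jacobiSym, jacobiSym.quadratic_reciprocity_one_mod_four hN
      ((Fact.out : P.Prime).odd_of_ne_two hP2), jacobiSym.mod_left' (a₂ := -1),
      jacobiSym.at_neg_one (Nat.odd_iff.2 (by omega)), ZMod.χ₄_nat_one_mod_four hN]
    exact Int.modEq_iff_dvd.2 ⟨-D, by linear_combination hNDZ⟩
  have hDP : legendreSym P D = 1 := by
    have h := legendreSym.mul P N D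
    rw [hNDZ, hNP, one_mul, legendreSym.mod, Int.add_emod_left, ← legendreSym.mod,
      legendreSym.at_one] at h
    exact h.symm
  have hnegD : legendreSym P (-D) = 1 := by
    rw [neg_eq_neg_one_mul, legendreSym.mul, legendreSym.at_neg_one hP2,
      ZMod.χ₄_nat_one_mod_four hP, hDP, mul_one]
  have hD0 : ((-D : ℤ) : ZMod P) ≠ 0 := by
    rw [Int.cast_neg, neg_ne_zero, Int.cast_natCast, Ne, ZMod.natCast_eq_zero_iff]
    intro hPD
    have h1 : P ∣ P + 1 := hND ▸ dvd_mul_of_dvd_right hPD N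
    exact (Fact.out : P.Prime).not_dvd_one ((Nat.dvd_add_right (dvd_refl P)).1 h1)
  obtain ⟨c, hc⟩ := (legendreSym.eq_one_iff P hD0).1 hnegD
  obtain ⟨s, hs⟩ : (P : ℤ) ∣ (c.val : ℤ) ^ 2 + D := by
    rw [← ZMod.intCast_zmod_eq_zero_iff_dvd]
    push_cast at hc ⊢
    rw [ZMod.natCast_zmod_val]
    linear_combination -hc
  exact ⟨c.val, s, hs⟩

theorem posDef_of_sq_add_eq_mul {N P D t s : ℤ} (hP : 0 < P) (hD : 0 < D)
    (hts : t ^ 2 + D = P * s) (hND : N * D = P + 1) :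
    (!![s, t, 1; t, P, 0; 1, 0, N] : Matrix (Fin 3) (Fin 3) ℤ).PosDef := by
  have hs : 0 < s := by nlinarith
  refine .of_dotProduct_mulVec_pos ?_ fun v hv => ?_
  · rw [isHermitian_iff_isSymm]
    ext i j
    fin_cases i <;> fin_cases j <;> rfl
  have key : s * D * (v ⬝ᵥ !![s, t, 1; t, P, 0; 1, 0, N] *ᵥ v) =
      D * (s * v 0 + t * v 1 + v 2) ^ 2 + (D * v 1 - t * v 2) ^ 2 + s * v 2 ^ 2 := by
    simp only [dotProduct, mulVec, of_apply, cons_val', cons_val_zero, cons_val_one, cons_val,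
      cons_val_fin_one, Fin.sum_univ_three]
    linear_combination -(D * v 1 ^ 2 + v 2 ^ 2) * hts + s * v 2 ^ 2 * hND
  simp only [star_trivial]
  refine pos_of_mul_pos_right (key ▸ ?_) (by positivity : 0 ≤ s * D)
  have hA : 0 ≤ D * (s * v 0 + t * v 1 + v 2) ^ 2 := by positivity
  rcases eq_or_ne (v 2) 0 with h2 | h2
  · rw [h2] at hA ⊢
    rcases eq_or_ne (v 1) 0 with h1 | h1
    · have h0 : v 0 ≠ 0 := fun h0 => hv (by ext i; fin_cases i <;> simp [h0, h1, h2])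
      have : 0 < D * (s * v 0) ^ 2 := by positivity
      rw [h1]
      linarith
    · have : 0 < (D * v 1) ^ 2 := by positivity
      linarith
  · positivity

theorem det_eq_one_of_sq_add_eq_mul {N P D t s : ℤ} (hts : t ^ 2 + D = P * s)
    (hND : N * D = P + 1) : (!![s, t, 1; t, P, 0; 1, 0, N] : Matrix (Fin 3) (Fin 3) ℤ).det = 1 := by
  simp only [det_fin_three, of_apply, cons_val', cons_val_zero, cons_val_one, cons_val,
    cons_val_fin_one]
  linear_combination -N * hts + hND

theorem Nat.exists_sq_add_sq_add_sq_of_mod_four_eq_one {N : ℕ} (hN : N % 4 = 1) :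
    ∃ a b c : ℤ, N = a ^ 2 + b ^ 2 + c ^ 2 := by
  obtain ⟨P, hP, hP4, D, hD⟩ := Nat.exists_prime_mod_four_eq_one_dvd_add_one hN
  have := Fact.mk hP
  obtain ⟨t, s, hts⟩ := exists_sq_add_eq_mul_of_mul_eq_add_one hP4 hN hD.symm
  have hDZ : (N : ℤ) * D = P + 1 := by exact_mod_cast hD.symm
  have hD0 : 0 < D := Nat.pos_of_ne_zero (by rintro rfl; simp at hD)
  obtain ⟨L, hL⟩ := (posDef_of_sq_add_eq_mul (by exact_mod_cast hP.pos) (by exact_mod_cast hD0)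
    hts hDZ).exists_eq_transpose_mul_self_fin_three (det_eq_one_of_sq_add_eq_mul hts hDZ)
  refine ⟨L 0 2, L 1 2, L 2 2, ?_⟩
  simpa [Matrix.mul_apply, Fin.sum_univ_three, sq] using congrFun₂ hL 2 2

theorem eight_mul_triangular_add_one (z : ℕ) : 8 * triangular z + 1 = (2 * z + 1) ^ 2 := by
  obtain ⟨k, hk⟩ := Nat.even_mul_succ_self z
  have : triangular z = k := by rw [triangular, hk]; omega
  rw [this]
  nlinarith

theorem Int.exists_sq_add_sq_add_sq_odd {u v w : ℤ} (h : Odd (u ^ 2 + v ^ 2 + w ^ 2)) :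
    ∃ a b c : ℤ, u ^ 2 + v ^ 2 + w ^ 2 = a ^ 2 + b ^ 2 + c ^ 2 ∧ Odd c := by
  rcases Int.even_or_odd w with hw | hw
  swap; · exact ⟨u, v, w, rfl, hw⟩
  rcases Int.even_or_odd v with hv | hv
  swap; · exact ⟨u, w, v, by ring, hv⟩
  exact ⟨v, w, u, by ring, by simpa [parity_simps, hv, hw] using h⟩

/-- Every natural number is a sum of two squares plus one triangular number. -/
theorem sum_two_squares_add_triangular (n : ℕ) :
    ∃ x y z : ℕ, n = x ^ 2 + y ^ 2 + triangular z := by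
  obtain ⟨u, v, w, h⟩ := Nat.exists_sq_add_sq_add_sq_of_mod_four_eq_one (N := 8 * n + 1) (by omega)
  push_cast at h
  have hodd : Odd (u ^ 2 + v ^ 2 + w ^ 2) := h ▸ ⟨4 * n, by ring⟩
  obtain ⟨a, b, c, habc, hc⟩ := Int.exists_sq_add_sq_add_sq_odd hodd
  obtain ⟨z, hz⟩ := Int.natAbs_odd.2 hc
  have hcz : c ^ 2 = 8 * triangular z + 1 := by
    rw [← Int.natAbs_sq, hz]
    exact_mod_cast (eight_mul_triangular_add_one z).symm
  have hab : 2 * (2 * (2 * ((n : ℤ) - triangular z))) = a ^ 2 + b ^ 2 := by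
    linear_combination h + habc + hcz
  obtain ⟨x, y, hxy⟩ : ∃ x y : ℤ, (n : ℤ) - triangular z = x ^ 2 + y ^ 2 :=
    ⟨_, _, Int.sq_add_sq_of_two_mul_sq_add_sq <| Int.sq_add_sq_of_two_mul_sq_add_sq <|
      Int.sq_add_sq_of_two_mul_sq_add_sq hab⟩
  refine ⟨x.natAbs, y.natAbs, z, ?_⟩
  have : ((x.natAbs ^ 2 + y.natAbs ^ 2 + triangular z : ℕ) : ℤ) = n := by
    push_cast [Int.natAbs_sq, sq_abs]
    linear_combination -hxy
  exact_mod_cast this.symm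
end

section
/- Every natural number n can be written as a sum of two triangular numbers plus one square: there exist natural numbers x, y, z with n = t_x + t_y + z². -/
/-!
If `4m + 1 = (2k + 1)² + (2b)² + (2c)²` then `m = t_{k+b} + t_{k-b} + c²` (with `t_{-j} = t_{j-1}`),
and a representation of `4m + 1` as a sum of three squares always has this shape, since squares
are `0` or `1` mod `4`.

That every `n ≡ 1 (mod 4)` is a sum of three squares is Gauss's argument. By Dirichlet there is a
prime `p ≡ 2n - 1 (mod 4n)`; then `p ≡ 1 (mod 4)` and `n ∣ p + 1`, and quadratic reciprocity makes
`-(p + 1) / n` a square `β²` mod `p`. With `p γ = β² + (p + 1) / n`, the tridiagonal form with rows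
`(n, 1, 0), (1, γ, -β), (0, -β, p)` is positive definite of determinant `1` and represents `n`.
Finally, a positive definite integral form of determinant `1` in three variables is equivalent to
`x² + y² + z²`: after moving a minimal vector to the first basis vector and completing the square,
Hermite's estimate bounds its minimum `μ` by `27 μ³ ≤ 64`, so `μ = 1` and what is left is a binary
form of determinant `1`, which is treated in the same way.
-/

open Matrix

lemma Int.exists_four_mul_sq_le {a : ℤ} (ha : 0 < a) (t : ℤ) :
    ∃ x, 4 * (a * x + t) ^ 2 ≤ a ^ 2 := by
  obtain ⟨q, r, hr0, hra, hqr⟩ : ∃ q r, 0 ≤ r ∧ r < 2 * a ∧ 2 * t + a = 2 * a * q + r :=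
    ⟨_, _, Int.emod_nonneg _ (by omega), Int.emod_lt_of_pos _ (by omega),
      (Int.mul_ediv_add_emod (2 * t + a) (2 * a)).symm⟩
  exact ⟨-q, by nlinarith⟩

lemma Int.exists_eq_mul_isCoprime (a b : ℤ) :
    ∃ g a' b', a = g * a' ∧ b = g * b' ∧ IsCoprime a' b' := by
  rcases (Int.gcd a b).eq_zero_or_pos with h | h
  · obtain ⟨rfl, rfl⟩ := Int.gcd_eq_zero_iff.mp h
    exact ⟨0, 1, 0, by simp, by simp, isCoprime_one_left⟩
  · obtain ⟨g, a', b', -, hab, rfl, rfl⟩ := Int.exists_gcd_one' h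
    exact ⟨g, a', b', mul_comm _ _, mul_comm _ _, Int.isCoprime_iff_gcd_eq_one.mpr hab⟩

def IsPrimitiveVec {ι : Type*} (v : ι → ℤ) : Prop :=
  ∀ d : ℤ, (∀ i, d ∣ v i) → IsUnit d

lemma IsPrimitiveVec.isCoprime {ι : Type*} {v : ι → ℤ} (hv : IsPrimitiveVec v) {a b : ℤ}
    (h : ∀ d, d ∣ a → d ∣ b → ∀ i, d ∣ v i) : IsCoprime a b := by
  rw [Int.isCoprime_iff_gcd_eq_one, ← Int.natAbs_natCast (Int.gcd a b),
    ← Int.isUnit_iff_natAbs_eq]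
  exact hv _ (h _ (Int.gcd_dvd_left ..) (Int.gcd_dvd_right ..))

namespace Matrix

section CommRing

variable {ι R : Type*} [Fintype ι] [CommRing R] {n : ℕ}

lemma dotProduct_mulVec_transpose_mul_mul (A U : Matrix ι ι R) (x y : ι → R) :
    x ⬝ᵥ (Uᵀ * A * U) *ᵥ y = (U *ᵥ x) ⬝ᵥ A *ᵥ (U *ᵥ y) := by
  rw [← mulVec_mulVec, ← mulVec_mulVec, dotProduct_mulVec, vecMul_transpose]

lemma transpose_mul_mul_apply [DecidableEq ι] (A U : Matrix ι ι R) (i j : ι) :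
    (Uᵀ * A * U) i j = U.col i ⬝ᵥ A *ᵥ U.col j := by
  rw [← mulVec_single_one, ← mulVec_single_one, ← dotProduct_mulVec_transpose_mul_mul]
  simp

lemma det_transpose_mul_mul_of_det_eq_one [DecidableEq ι] (A : Matrix ι ι R)
    {U : Matrix ι ι R} (hU : U.det = 1) : (Uᵀ * A * U).det = A.det := by
  simp [hU]

lemma mulVec_injective_of_det_eq_one [DecidableEq ι] {U : Matrix ι ι R} (hU : U.det = 1) :
    Function.Injective U.mulVec :=
  mulVec_injective_of_isUnit ((isUnit_iff_isUnit_det U).mpr (hU ▸ isUnit_one))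

lemma mulVec_surjective_of_det_eq_one [DecidableEq ι] {U : Matrix ι ι R} (hU : U.det = 1) :
    Function.Surjective U.mulVec :=
  mulVec_surjective_iff_isUnit.mpr ((isUnit_iff_isUnit_det U).mpr (hU ▸ isUnit_one))

/-- `B 0 0` times the Schur complement of the corner entry, which keeps it integral. -/
def cornerSchur (B : Matrix (Fin (n + 1)) (Fin (n + 1)) R) : Matrix (Fin n) (Fin n) R :=
  B 0 0 • B.submatrix Fin.succ Fin.succ - vecMulVec (Fin.tail (B 0)) (Fin.tail (B 0))

lemma isSymm_cornerSchur {B : Matrix (Fin (n + 1)) (Fin (n + 1)) R} (hB : B.IsSymm) :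
    (cornerSchur B).IsSymm :=
  ((hB.submatrix Fin.succ).smul (B 0 0)).sub (transpose_vecMulVec _ _)

lemma dotProduct_mulVec_cornerSchur (B : Matrix (Fin (n + 1)) (Fin (n + 1)) R) (y : Fin n → R) :
    y ⬝ᵥ cornerSchur B *ᵥ y =
      B 0 0 * (y ⬝ᵥ B.submatrix Fin.succ Fin.succ *ᵥ y) - (Fin.tail (B 0) ⬝ᵥ y) ^ 2 := by
  rw [cornerSchur, sub_mulVec, dotProduct_sub, smul_mulVec, dotProduct_smul, smul_eq_mul,
    vecMulVec_mulVec, dotProduct_smul, op_smul_eq_mul, dotProduct_comm y (Fin.tail (B 0)), sq]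

lemma IsSymm.dotProduct_mulVec_cons {B : Matrix (Fin (n + 1)) (Fin (n + 1)) R} (hB : B.IsSymm)
    (x : R) (y : Fin n → R) :
    Fin.cons x y ⬝ᵥ B *ᵥ Fin.cons x y =
      B 0 0 * x ^ 2 + 2 * x * (Fin.tail (B 0) ⬝ᵥ y) +
        y ⬝ᵥ B.submatrix Fin.succ Fin.succ *ᵥ y := by
  have hsymm (i : Fin n) : B i.succ 0 = B 0 i.succ := hB.apply 0 i.succ
  simp only [dotProduct, mulVec, Fin.sum_univ_succ, Fin.cons_zero, Fin.cons_succ, hsymm,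
    Fin.tail, submatrix_apply, Finset.mul_sum, mul_add, Finset.sum_add_distrib]
  have hcross : ∑ i, 2 * x * (B 0 i.succ * y i) =
      ∑ i, y i * (B 0 i.succ * x) + ∑ i, x * (B 0 i.succ * y i) := by
    rw [← Finset.sum_add_distrib]
    exact Finset.sum_congr rfl fun i _ => by ring
  rw [hcross]
  ring

lemma IsSymm.corner_mul_dotProduct_mulVec_cons {B : Matrix (Fin (n + 1)) (Fin (n + 1)) R}
    (hB : B.IsSymm) (x : R) (y : Fin n → R) :
    B 0 0 * (Fin.cons x y ⬝ᵥ B *ᵥ Fin.cons x y) =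
      (B 0 0 * x + Fin.tail (B 0) ⬝ᵥ y) ^ 2 + y ⬝ᵥ cornerSchur B *ᵥ y := by
  rw [hB.dotProduct_mulVec_cons, dotProduct_mulVec_cornerSchur]
  ring

lemma IsSymm.dotProduct_mulVec_eq_sq_add_cornerSchur {B : Matrix (Fin (n + 1)) (Fin (n + 1)) R}
    (hB : B.IsSymm) (h : B 0 0 = 1) (y : Fin (n + 1) → R) :
    y ⬝ᵥ B *ᵥ y =
      (y 0 + Fin.tail (B 0) ⬝ᵥ Fin.tail y) ^ 2 + Fin.tail y ⬝ᵥ cornerSchur B *ᵥ Fin.tail y := by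
  have := hB.corner_mul_dotProduct_mulVec_cons (y 0) (Fin.tail y)
  rwa [Fin.cons_self_tail, h, one_mul, one_mul] at this

lemma IsSymm.dotProduct_mulVec_cornerSchur_fin_two {B : Matrix (Fin 2) (Fin 2) R}
    (hB : B.IsSymm) (y : Fin 1 → R) : y ⬝ᵥ cornerSchur B *ᵥ y = B.det * y 0 ^ 2 := by
  simp only [cornerSchur, dotProduct, mulVec, vecMulVec, Fin.tail, sub_apply, smul_apply,
    submatrix_apply, smul_eq_mul, of_apply, Finset.univ_unique, Fin.default_eq_zero,
    Finset.sum_singleton, Fin.succ_zero_eq_one, det_fin_two, hB.apply 0 1]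
  ring

lemma IsSymm.det_cornerSchur_fin_three {B : Matrix (Fin 3) (Fin 3) R} (hB : B.IsSymm) :
    (cornerSchur B).det = B 0 0 * B.det := by
  simp only [cornerSchur, vecMulVec, Fin.tail, det_fin_two, det_fin_three, sub_apply, smul_apply,
    submatrix_apply, smul_eq_mul, of_apply, Fin.succ_zero_eq_one, Fin.succ_one_eq_two,
    hB.apply 0 1, hB.apply 0 2, hB.apply 1 2]
  ring

end CommRing

variable {ι : Type*} {n : ℕ}

lemma PosDef.isSymm_int {A : Matrix ι ι ℤ} (hA : A.PosDef) : A.IsSymm := by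
  simpa using hA.isHermitian

variable [Fintype ι]

lemma PosDef.dotProduct_mulVec_pos_int {A : Matrix ι ι ℤ} (hA : A.PosDef) {x : ι → ℤ}
    (hx : x ≠ 0) : 0 < x ⬝ᵥ A *ᵥ x := by
  simpa using hA.dotProduct_mulVec_pos hx

lemma PosDef.of_isSymm_of_pos {A : Matrix ι ι ℤ} (hA : A.IsSymm)
    (hpos : ∀ x ≠ 0, 0 < x ⬝ᵥ A *ᵥ x) : A.PosDef :=
  PosDef.of_dotProduct_mulVec_pos (by simpa using hA) fun x hx => by simpa using hpos x hx

lemma PosDef.transpose_mul_mul [DecidableEq ι] {A : Matrix ι ι ℤ} (hA : A.PosDef)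
    {U : Matrix ι ι ℤ} (hU : U.det = 1) : (Uᵀ * A * U).PosDef := by
  simpa [conjTranspose_eq_transpose_of_trivial] using
    hA.conjTranspose_mul_mul_same (mulVec_injective_of_det_eq_one hU)

lemma PosDef.exists_isMin [Nonempty ι] [DecidableEq ι] {A : Matrix ι ι ℤ} (hA : A.PosDef) :
    ∃ v ≠ 0, ∀ w ≠ 0, v ⬝ᵥ A *ᵥ v ≤ w ⬝ᵥ A *ᵥ w := by
  obtain ⟨_, ⟨v, hv, rfl⟩, hmin⟩ :=
    Int.exists_least_of_bdd (P := fun z => ∃ v ≠ 0, v ⬝ᵥ A *ᵥ v = z)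
      ⟨0, fun _ ⟨_, hv, hz⟩ => hz ▸ (hA.dotProduct_mulVec_pos_int hv).le⟩
      ⟨_, Pi.single (Classical.arbitrary ι) 1, by simp, rfl⟩
  exact ⟨v, hv, fun w hw => hmin _ ⟨w, hw, rfl⟩⟩

lemma PosDef.isPrimitiveVec_of_isMin {A : Matrix ι ι ℤ} (hA : A.PosDef) {v : ι → ℤ}
    (hv : v ≠ 0) (hmin : ∀ w ≠ 0, v ⬝ᵥ A *ᵥ v ≤ w ⬝ᵥ A *ᵥ w) : IsPrimitiveVec v := by
  intro d hd
  set w : ι → ℤ := fun i => v i / d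
  have hvw : v = d • w := funext fun i => (Int.mul_ediv_cancel' (hd i)).symm
  have hw : w ≠ 0 := fun h => hv (by rw [hvw, h, smul_zero])
  have hd0 : d ≠ 0 := by rintro rfl; exact hv (by rw [hvw, zero_smul])
  have hle : d ^ 2 * (w ⬝ᵥ A *ᵥ w) ≤ 1 * (w ⬝ᵥ A *ᵥ w) := by
    have := hmin w hw
    rw [hvw, mulVec_smul, dotProduct_smul, smul_dotProduct, smul_eq_mul, smul_eq_mul] at this
    linarith
  have hd2 : d ^ 2 ≤ 1 := le_of_mul_le_mul_right hle (hA.dotProduct_mulVec_pos_int hw)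
  have : -1 ≤ d ∧ d ≤ 1 := by constructor <;> nlinarith
  rw [Int.isUnit_iff]
  omega

lemma exists_det_eq_one_col_zero_eq_fin_two {v : Fin 2 → ℤ} (hv : IsPrimitiveVec v) :
    ∃ U : Matrix (Fin 2) (Fin 2) ℤ, U.det = 1 ∧ U.col 0 = v := by
  obtain ⟨a, b, hab⟩ : IsCoprime (v 0) (v 1) := hv.isCoprime fun d h₀ h₁ i => by
    fin_cases i
    exacts [h₀, h₁]
  refine ⟨!![v 0, -b; v 1, a], ?_, ?_⟩
  · rw [det_fin_two_of]
    linear_combination hab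
  · ext i
    fin_cases i <;> rfl

lemma exists_det_eq_one_col_zero_eq_fin_three {v : Fin 3 → ℤ} (hv : IsPrimitiveVec v) :
    ∃ U : Matrix (Fin 3) (Fin 3) ℤ, U.det = 1 ∧ U.col 0 = v := by
  obtain ⟨g, w₀, w₁, hv₀, hv₁, A, B, hAB⟩ := Int.exists_eq_mul_isCoprime (v 0) (v 1)
  obtain ⟨r, s, hrs⟩ : IsCoprime g (v 2) := hv.isCoprime fun d hg h₂ i => by
    fin_cases i
    exacts [hv₀ ▸ hg.mul_right _, hv₁ ▸ hg.mul_right _, h₂]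
  -- the determinant is `(r g + s v₂) (A w₀ + B w₁)`
  refine ⟨!![v 0, -B, -s * w₀; v 1, A, -s * w₁; v 2, 0, r], ?_, ?_⟩
  · rw [det_fin_three]
    simp only [of_apply, cons_val', cons_val_zero, cons_val_fin_one, cons_val_one, cons_val,
      mul_zero, sub_zero, add_zero]
    linear_combination (r * g + s * v 2) * hAB + hrs + A * r * hv₀ + B * r * hv₁
  · ext i
    fin_cases i <;> rfl

lemma PosDef.exists_reduced {A : Matrix (Fin (n + 1)) (Fin (n + 1)) ℤ} (hA : A.PosDef)
    (complete : ∀ v : Fin (n + 1) → ℤ, IsPrimitiveVec v →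
      ∃ U : Matrix (Fin (n + 1)) (Fin (n + 1)) ℤ, U.det = 1 ∧ U.col 0 = v) :
    ∃ U : Matrix (Fin (n + 1)) (Fin (n + 1)) ℤ, U.det = 1 ∧
      ∀ w ≠ 0, (Uᵀ * A * U) 0 0 ≤ w ⬝ᵥ (Uᵀ * A * U) *ᵥ w := by
  obtain ⟨v, hv, hmin⟩ := hA.exists_isMin
  obtain ⟨U, hU, hcol⟩ := complete v (hA.isPrimitiveVec_of_isMin hv hmin)
  refine ⟨U, hU, fun w hw => ?_⟩
  rw [transpose_mul_mul_apply, hcol, dotProduct_mulVec_transpose_mul_mul]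
  exact hmin _ fun h => hw (mulVec_injective_of_det_eq_one hU (h.trans (mulVec_zero U).symm))

/-- Hermite's bound: choose `x` with `|B 0 0 * x + ⟨b, y⟩| ≤ B 0 0 / 2` and compare `B 0 0`
with the value at `(x, y)`. -/
lemma three_mul_sq_le_four_mul_cornerSchur {B : Matrix (Fin (n + 1)) (Fin (n + 1)) ℤ}
    (hB : B.IsSymm) (h0 : 0 < B 0 0) (hmin : ∀ w ≠ 0, B 0 0 ≤ w ⬝ᵥ B *ᵥ w)
    {y : Fin n → ℤ} (hy : y ≠ 0) : 3 * B 0 0 ^ 2 ≤ 4 * (y ⬝ᵥ cornerSchur B *ᵥ y) := by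
  obtain ⟨x, hx⟩ := Int.exists_four_mul_sq_le h0 (Fin.tail (B 0) ⬝ᵥ y)
  have hle : B 0 0 * B 0 0 ≤ B 0 0 * (Fin.cons x y ⬝ᵥ B *ᵥ Fin.cons x y) :=
    mul_le_mul_of_nonneg_left (hmin _ fun h => hy (cons_eq_zero_iff.mp h).2) h0.le
  rw [hB.corner_mul_dotProduct_mulVec_cons] at hle
  nlinarith

lemma PosDef.three_mul_sq_le_four_mul_det_fin_two {B : Matrix (Fin 2) (Fin 2) ℤ}
    (hB : B.PosDef) (hmin : ∀ w ≠ 0, B 0 0 ≤ w ⬝ᵥ B *ᵥ w) : 3 * B 0 0 ^ 2 ≤ 4 * B.det := by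
  simpa [hB.isSymm_int.dotProduct_mulVec_cornerSchur_fin_two] using
    three_mul_sq_le_four_mul_cornerSchur hB.isSymm_int hB.diag_pos hmin (y := ![1]) (by simp)

lemma PosDef.exists_three_mul_sq_le_four_mul_det_fin_two {A : Matrix (Fin 2) (Fin 2) ℤ}
    (hA : A.PosDef) : ∃ v ≠ 0, 3 * (v ⬝ᵥ A *ᵥ v) ^ 2 ≤ 4 * A.det := by
  obtain ⟨U, hU, hmin⟩ := hA.exists_reduced fun _ => exists_det_eq_one_col_zero_eq_fin_two
  refine ⟨U.col 0, fun h => ?_, ?_⟩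
  · exact one_ne_zero (hU ▸ det_eq_zero_of_column_eq_zero 0 fun i => congrFun h i)
  · rw [← transpose_mul_mul_apply, ← det_transpose_mul_mul_of_det_eq_one A hU]
    exact (hA.transpose_mul_mul hU).three_mul_sq_le_four_mul_det_fin_two hmin

lemma PosDef.exists_eq_sq_add_sq_fin_two {A : Matrix (Fin 2) (Fin 2) ℤ} (hA : A.PosDef)
    (hdet : A.det = 1) (x : Fin 2 → ℤ) : ∃ s t : ℤ, x ⬝ᵥ A *ᵥ x = s ^ 2 + t ^ 2 := by
  obtain ⟨U, hU, hmin⟩ := hA.exists_reduced fun _ => exists_det_eq_one_col_zero_eq_fin_two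
  obtain ⟨y, rfl⟩ := mulVec_surjective_of_det_eq_one hU x
  have hB := hA.transpose_mul_mul hU
  have hBdet := det_transpose_mul_mul_of_det_eq_one A hU
  rw [← dotProduct_mulVec_transpose_mul_mul]
  generalize Uᵀ * A * U = B at hB hBdet hmin ⊢
  have hcorner : B 0 0 = 1 := by
    have := hB.three_mul_sq_le_four_mul_det_fin_two hmin
    nlinarith [hB.diag_pos (i := 0)]
  refine ⟨y 0 + Fin.tail (B 0) ⬝ᵥ Fin.tail y, y 1, ?_⟩
  rw [hB.isSymm_int.dotProduct_mulVec_eq_sq_add_cornerSchur hcorner,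
    hB.isSymm_int.dotProduct_mulVec_cornerSchur_fin_two, hBdet, hdet, one_mul]
  rfl

lemma PosDef.exists_eq_sq_add_sq_add_sq_fin_three {A : Matrix (Fin 3) (Fin 3) ℤ}
    (hA : A.PosDef) (hdet : A.det = 1) (x : Fin 3 → ℤ) :
    ∃ r s t : ℤ, x ⬝ᵥ A *ᵥ x = r ^ 2 + s ^ 2 + t ^ 2 := by
  obtain ⟨U, hU, hmin⟩ := hA.exists_reduced fun _ => exists_det_eq_one_col_zero_eq_fin_three
  obtain ⟨y, rfl⟩ := mulVec_surjective_of_det_eq_one hU x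
  have hB := hA.transpose_mul_mul hU
  have hBdet := det_transpose_mul_mul_of_det_eq_one A hU
  rw [← dotProduct_mulVec_transpose_mul_mul]
  generalize Uᵀ * A * U = B at hB hBdet hmin ⊢
  have hμ := hB.diag_pos (i := 0)
  have hG (z : Fin 2 → ℤ) (hz : z ≠ 0) : 3 * B 0 0 ^ 2 ≤ 4 * (z ⬝ᵥ cornerSchur B *ᵥ z) :=
    three_mul_sq_le_four_mul_cornerSchur hB.isSymm_int hμ hmin hz
  have hGpos : (cornerSchur B).PosDef :=
    PosDef.of_isSymm_of_pos (isSymm_cornerSchur hB.isSymm_int) fun z hz => by nlinarith [hG z hz]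
  have hGdet : (cornerSchur B).det = B 0 0 := by
    rw [hB.isSymm_int.det_cornerSchur_fin_three, hBdet, hdet, mul_one]
  -- with `μ = B 0 0` and `m` the value of `cornerSchur B` at `z`: `3 μ² ≤ 4 m` and `3 m² ≤ 4 μ`,
  -- so `27 μ³ ≤ 64`
  have hcorner : B 0 0 = 1 := by
    obtain ⟨z, hz, hle⟩ := hGpos.exists_three_mul_sq_le_four_mul_det_fin_two
    have hm := hGpos.dotProduct_mulVec_pos_int hz
    rw [hGdet] at hle
    by_contra hne
    nlinarith [hG z hz, mul_nonneg (by omega : 0 ≤ B 0 0 - 2) hμ.le,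
      mul_nonneg (by omega : 0 ≤ z ⬝ᵥ cornerSchur B *ᵥ z - 1)
        (by omega : 0 ≤ 3 * (z ⬝ᵥ cornerSchur B *ᵥ z) - 1)]
  rw [hcorner] at hGdet
  obtain ⟨s, t, hst⟩ := hGpos.exists_eq_sq_add_sq_fin_two hGdet (Fin.tail y)
  refine ⟨y 0 + Fin.tail (B 0) ⬝ᵥ Fin.tail y, s, t, ?_⟩
  rw [hB.isSymm_int.dotProduct_mulVec_eq_sq_add_cornerSchur hcorner, hst, add_assoc]

end Matrix

lemma exists_prime_mod_four_eq_one_dvd_add_one {n : ℕ} (hn : n % 4 = 1) :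
    ∃ p : ℕ, p.Prime ∧ p % 4 = 1 ∧ n ∣ p + 1 := by
  have hcop : Nat.Coprime (2 * n - 1) (4 * n) := by
    rw [← Nat.isCoprime_iff_coprime]
    refine ⟨2 * n - 1, -(n - 1), ?_⟩
    push_cast [Nat.cast_sub (show 1 ≤ 2 * n by omega)]
    ring
  have : NeZero (4 * n) := ⟨by omega⟩
  obtain ⟨p, -, hp, hpmod⟩ :=
    Nat.forall_exists_prime_gt_and_eq_mod ((ZMod.isUnit_iff_coprime _ _).mpr hcop) 0
  have hmod : p ≡ 2 * n - 1 [MOD 4 * n] := (ZMod.natCast_eq_natCast_iff _ _ _).mp hpmod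
  refine ⟨p, hp, ?_, ?_⟩
  · have h4 : p % 4 = (2 * n - 1) % 4 := hmod.of_dvd (dvd_mul_right 4 n)
    omega
  · have h : p + 1 ≡ 2 * n - 1 + 1 [MOD n] := (hmod.of_dvd (dvd_mul_left n 4)).add_right 1
    rw [Nat.sub_add_cancel (by omega)] at h
    exact Nat.modEq_zero_iff_dvd.mp (h.trans (Nat.modEq_zero_iff_dvd.mpr (dvd_mul_left n 2)))

lemma ZMod.isSquare_neg_of_mul_eq_add_one {p n Δ : ℕ} [Fact p.Prime] (hp : p % 4 = 1)
    (hn : n % 4 = 1) (h : n * Δ = p + 1) : IsSquare (-(Δ : ZMod p)) := by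
  have hinv : (n : ZMod p) * Δ = 1 := by
    have := congrArg (Nat.cast : ℕ → ZMod p) h
    push_cast at this
    rw [this, ZMod.natCast_self, zero_add]
  have hneg : IsSquare (-1 : ZMod p) := ZMod.exists_sq_eq_neg_one_iff.mpr (by omega)
  have hmod : (p : ℤ) ≡ -1 [ZMOD (n : ℕ)] :=
    Int.modEq_iff_dvd.mpr ⟨-Δ, by linear_combination (by exact_mod_cast h : (n : ℤ) * Δ = p + 1)⟩
  have hJ : jacobiSym n p = 1 := by
    rw [jacobiSym.quadratic_reciprocity_one_mod_four hn
        ((Fact.out : p.Prime).odd_of_ne_two (by omega)),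
      jacobiSym.mod_left' hmod, jacobiSym.at_neg_one (Nat.odd_iff.mpr (by omega)),
      ZMod.χ₄_nat_one_mod_four hn]
  have hsq : IsSquare (n : ZMod p) := by simpa using ZMod.isSquare_of_jacobiSym_eq_one hJ
  have : -(Δ : ZMod p) = -1 * n * Δ ^ 2 := by linear_combination (Δ : ZMod p) * hinv
  rw [this]
  exact (hneg.mul hsq).mul (IsSquare.sq _)

lemma posDef_tridiagonal_of_mul_eq {n p β γ Δ : ℤ} (hn : 0 < n) (hp : 0 < p)
    (hγ : p * γ = β ^ 2 + Δ) (hΔ : n * Δ = p + 1) :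
    (!![n, 1, 0; 1, γ, -β; 0, -β, p]).PosDef := by
  refine Matrix.PosDef.of_isSymm_of_pos ?_ fun x hx => ?_
  · ext i j
    fin_cases i <;> fin_cases j <;> rfl
  have key : n * p * (x ⬝ᵥ !![n, 1, 0; 1, γ, -β; 0, -β, p] *ᵥ x) =
      p * (n * x 0 + x 1) ^ 2 + x 1 ^ 2 + n * (p * x 2 - β * x 1) ^ 2 := by
    simp only [dotProduct, mulVec, Fin.sum_univ_three, of_apply, cons_val', cons_val_fin_one,
      cons_val_zero, cons_val_one, cons_val, one_mul, zero_mul, add_zero, neg_mul, zero_add]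
    linear_combination (n * x 1 ^ 2) * hγ + x 1 ^ 2 * hΔ
  have hpos : 0 < p * (n * x 0 + x 1) ^ 2 + x 1 ^ 2 + n * (p * x 2 - β * x 1) ^ 2 := by
    by_cases h₁ : x 1 = 0
    · by_cases h₀ : x 0 = 0
      · have h₂ : x 2 ≠ 0 := fun h₂ => hx (by ext i; fin_cases i <;> assumption)
        rw [h₀, h₁]
        have : 0 < n * (p * x 2) ^ 2 := by positivity
        linarith
      · rw [h₁]
        have : 0 < p * (n * x 0) ^ 2 := by positivity
        nlinarith [sq_nonneg (p * x 2 - β * 0)]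
    · have : 0 < x 1 ^ 2 := by positivity
      nlinarith [sq_nonneg (n * x 0 + x 1), sq_nonneg (p * x 2 - β * x 1)]
  rw [← key] at hpos
  exact pos_of_mul_pos_right hpos (mul_pos hn hp).le

lemma det_tridiagonal_of_mul_eq {n p β γ Δ : ℤ} (hγ : p * γ = β ^ 2 + Δ) (hΔ : n * Δ = p + 1) :
    (!![n, 1, 0; 1, γ, -β; 0, -β, p]).det = 1 := by
  simp only [det_fin_three, of_apply, cons_val', cons_val_zero, cons_val_fin_one, cons_val_one,
    cons_val, mul_neg, neg_mul, neg_neg, mul_one, one_mul, mul_zero, add_zero, zero_mul, neg_zero,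
    sub_zero]
  linear_combination n * hγ + hΔ

lemma exists_eq_sq_add_sq_add_sq_of_mod_four_eq_one {n : ℕ} (hn : n % 4 = 1) :
    ∃ r s t : ℤ, (n : ℤ) = r ^ 2 + s ^ 2 + t ^ 2 := by
  obtain ⟨p, hp, hp4, Δ, hΔ⟩ := exists_prime_mod_four_eq_one_dvd_add_one hn
  have := Fact.mk hp
  obtain ⟨b, hb⟩ := ZMod.isSquare_neg_of_mul_eq_add_one hp4 hn hΔ.symm
  obtain ⟨γ, hγ⟩ : (p : ℤ) ∣ (b.val : ℤ) ^ 2 + Δ := by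
    rw [← ZMod.intCast_zmod_eq_zero_iff_dvd]
    push_cast
    rw [ZMod.natCast_zmod_val, sq, ← hb, neg_add_cancel]
  have hΔ' : (n : ℤ) * Δ = p + 1 := by exact_mod_cast hΔ.symm
  have hA := posDef_tridiagonal_of_mul_eq (by omega) (by exact_mod_cast hp.pos) hγ.symm hΔ'
  obtain ⟨r, s, t, h⟩ :=
    hA.exists_eq_sq_add_sq_add_sq_fin_three (det_tridiagonal_of_mul_eq hγ.symm hΔ') (Pi.single 0 1)
  exact ⟨r, s, t, by simpa using h⟩

lemma two_mul_triangular (k : ℕ) : 2 * triangular k = k * (k + 1) :=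
  Nat.mul_div_cancel' (Nat.even_mul_succ_self k).two_dvd

lemma exists_natCast_mul_add_one_eq (k : ℤ) : ∃ x : ℕ, (x : ℤ) * (x + 1) = k * (k + 1) := by
  rcases le_or_gt 0 k with h | h
  · exact ⟨k.toNat, by rw [Int.toNat_of_nonneg h]⟩
  · exact ⟨(-1 - k).toNat, by rw [Int.toNat_of_nonneg (by omega)]; ring⟩

lemma exists_eq_odd_sq_add_even_sq_add_even_sq {m r s t : ℤ}
    (h : r ^ 2 + s ^ 2 + t ^ 2 = 4 * m + 1) :
    ∃ k b c : ℤ, r ^ 2 + s ^ 2 + t ^ 2 = (2 * k + 1) ^ 2 + (2 * b) ^ 2 + (2 * c) ^ 2 := by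
  rcases Int.even_or_odd' r with ⟨a, rfl | rfl⟩ <;>
    rcases Int.even_or_odd' s with ⟨b, rfl | rfl⟩ <;>
    rcases Int.even_or_odd' t with ⟨c, rfl | rfl⟩
  all_goals first
    | exact ⟨a, b, c, by ring1⟩
    | exact ⟨b, a, c, by ring1⟩
    | exact ⟨c, a, b, by ring1⟩
    | (ring_nf at h; omega)

lemma exists_triangular_add_triangular_add_sq_of_eq {m : ℕ} {k b c : ℤ}
    (h : 4 * (m : ℤ) + 1 = (2 * k + 1) ^ 2 + (2 * b) ^ 2 + (2 * c) ^ 2) :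
    ∃ x y z : ℕ, m = triangular x + triangular y + z ^ 2 := by
  obtain ⟨x, hx⟩ := exists_natCast_mul_add_one_eq (k + b)
  obtain ⟨y, hy⟩ := exists_natCast_mul_add_one_eq (k - b)
  have hx' : 2 * (triangular x : ℤ) = (k + b) * (k + b + 1) := by
    rw [← hx]
    exact_mod_cast two_mul_triangular x
  have hy' : 2 * (triangular y : ℤ) = (k - b) * (k - b + 1) := by
    rw [← hy]
    exact_mod_cast two_mul_triangular y
  refine ⟨x, y, c.natAbs, ?_⟩
  have : (m : ℤ) = triangular x + triangular y + (c.natAbs : ℤ) ^ 2 := by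
    rw [Int.natAbs_sq]
    linarith
  exact_mod_cast this

/-- Every natural number is a sum of two triangular numbers plus one square. -/
theorem sum_two_triangular_add_square (n : ℕ) :
    ∃ x y z : ℕ, n = triangular x + triangular y + z ^ 2 := by
  obtain ⟨r, s, t, h⟩ := exists_eq_sq_add_sq_add_sq_of_mod_four_eq_one (n := 4 * n + 1) (by omega)
  push_cast at h
  obtain ⟨k, b, c, hkbc⟩ := exists_eq_odd_sq_add_even_sq_add_even_sq h.symm
  exact exists_triangular_add_triangular_add_sq_of_eq (h.trans hkbc)
end
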